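/- Introducing a fresh proposition per subformula reduces CTL over an arbitrary Boolean base to temporal depth 2 with AG: for every CTL formula φ over a finite Boolean base C, the formula ψ := x_φ ∧ AG ξ — where ξ is the conjunction, over all subformulas α of φ, of the biconditionals x_α ↔ (the one-step definition of α in terms of the propositions x_β of its immediate subformulas, with Boolean functions expanded into DNF over {∧,∨,¬}) — is frame-equivalent to φ: a rooted serial frame carries a valuation satisfying φ iff it carries a valuation satisfying ψ. -/

import Mathlib

/-!
Forward direction: from a valuation satisfying `φ`, interpret each fresh proposition `x β` as
the truth set of `β` (well defined since `x` is injective; freshness leaves the atoms of `φ`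
untouched). Then every biconditional of `ξ` holds at every world, so `ψ` holds at the root.

Backward direction: in a serial frame every world reachable from the root lies on an infinite
path from it, so `AG ξ` makes `ξ` hold at all reachable worlds, and induction on subformulas
shows that `x α` and `α` agree there; in particular `x φ` at the root gives `φ`.

The depth bound holds because each one-step definition has temporal depth at most 1.
-/

def Serial {W : Type} (R : W → W → Prop) : Prop := ∀ w, ∃ u, R w u
def IsPath {W : Type} (R : W → W → Prop) (π : ℕ → W) : Prop := ∀ i, R (π i) (π (i+1))
structure Kripke (W : Type) where
  R : W → W → Prop
  V : ℕ → W → Prop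

/-- CTL formulas over an arbitrary (finite) Boolean base: connectives are arbitrary
Boolean functions of fixed arity. -/
inductive GF where
  | atom : ℕ → GF
  | bf : {n : ℕ} → ((Fin n → Bool) → Bool) → (Fin n → GF) → GF
  | AX : GF → GF
  | EX : GF → GF
  | AF : GF → GF
  | EF : GF → GF
  | AG : GF → GF
  | EG : GF → GF
  | AU : GF → GF → GF
  | EU : GF → GF → GF
  | AR : GF → GF → GF
  | ER : GF → GF → GF

def gsat {W : Type} (K : Kripke W) : GF → W → Prop
  | .atom p, w => K.V p w
  | .bf f args, w => ∃ b, f b = true ∧ ∀ i, (b i = true ↔ gsat K (args i) w)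
  | .AX φ, w => ∀ π : ℕ → W, IsPath K.R π → π 0 = w → gsat K φ (π 1)
  | .EX φ, w => ∃ π : ℕ → W, IsPath K.R π ∧ π 0 = w ∧ gsat K φ (π 1)
  | .AF φ, w => ∀ π : ℕ → W, IsPath K.R π → π 0 = w → ∃ i, gsat K φ (π i)
  | .EF φ, w => ∃ π : ℕ → W, IsPath K.R π ∧ π 0 = w ∧ ∃ i, gsat K φ (π i)
  | .AG φ, w => ∀ π : ℕ → W, IsPath K.R π → π 0 = w → ∀ i, gsat K φ (π i)
  | .EG φ, w => ∃ π : ℕ → W, IsPath K.R π ∧ π 0 = w ∧ ∀ i, gsat K φ (π i)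
  | .AU φ ψ, w => ∀ π : ℕ → W, IsPath K.R π → π 0 = w →
      ∃ i, gsat K ψ (π i) ∧ ∀ j, j < i → gsat K φ (π j)
  | .EU φ ψ, w => ∃ π : ℕ → W, IsPath K.R π ∧ π 0 = w ∧
      ∃ i, gsat K ψ (π i) ∧ ∀ j, j < i → gsat K φ (π j)
  | .AR φ ψ, w => ∀ π : ℕ → W, IsPath K.R π → π 0 = w →
      ∀ i, gsat K ψ (π i) ∨ ∃ j, j < i ∧ gsat K φ (π j)
  | .ER φ ψ, w => ∃ π : ℕ → W, IsPath K.R π ∧ π 0 = w ∧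
      ∀ i, gsat K ψ (π i) ∨ ∃ j, j < i ∧ gsat K φ (π j)

/-- Temporal depth. -/
def GF.td : GF → ℕ
  | .atom _ => 0
  | .bf _ args => Finset.univ.sup (fun i => (args i).td)
  | .AX φ => φ.td + 1
  | .EX φ => φ.td + 1
  | .AF φ => φ.td + 1
  | .EF φ => φ.td + 1
  | .AG φ => φ.td + 1
  | .EG φ => φ.td + 1
  | .AU φ ψ => max φ.td ψ.td + 1
  | .EU φ ψ => max φ.td ψ.td + 1
  | .AR φ ψ => max φ.td ψ.td + 1
  | .ER φ ψ => max φ.td ψ.td + 1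

/-- A list enumerating the subformulas of a formula. -/
def SFlist : GF → List GF
  | .atom p => [.atom p]
  | .bf f args => .bf f args :: (List.ofFn (fun i => SFlist (args i))).flatten
  | .AX φ => .AX φ :: SFlist φ
  | .EX φ => .EX φ :: SFlist φ
  | .AF φ => .AF φ :: SFlist φ
  | .EF φ => .EF φ :: SFlist φ
  | .AG φ => .AG φ :: SFlist φ
  | .EG φ => .EG φ :: SFlist φ
  | .AU φ ψ => .AU φ ψ :: (SFlist φ ++ SFlist ψ)
  | .EU φ ψ => .EU φ ψ :: (SFlist φ ++ SFlist ψ)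
  | .AR φ ψ => .AR φ ψ :: (SFlist φ ++ SFlist ψ)
  | .ER φ ψ => .ER φ ψ :: (SFlist φ ++ SFlist ψ)

/-- Occurrence of an atomic proposition in a formula. -/
inductive AtomOccurs (p : ℕ) : GF → Prop
  | atom : AtomOccurs p (.atom p)
  | bf {n : ℕ} {f : (Fin n → Bool) → Bool} {args : Fin n → GF} (i : Fin n) :
      AtomOccurs p (args i) → AtomOccurs p (.bf f args)
  | ax {φ} : AtomOccurs p φ → AtomOccurs p (.AX φ)
  | ex {φ} : AtomOccurs p φ → AtomOccurs p (.EX φ)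
  | af {φ} : AtomOccurs p φ → AtomOccurs p (.AF φ)
  | ef {φ} : AtomOccurs p φ → AtomOccurs p (.EF φ)
  | ag {φ} : AtomOccurs p φ → AtomOccurs p (.AG φ)
  | eg {φ} : AtomOccurs p φ → AtomOccurs p (.EG φ)
  | auL {φ ψ} : AtomOccurs p φ → AtomOccurs p (.AU φ ψ)
  | auR {φ ψ} : AtomOccurs p ψ → AtomOccurs p (.AU φ ψ)
  | euL {φ ψ} : AtomOccurs p φ → AtomOccurs p (.EU φ ψ)
  | euR {φ ψ} : AtomOccurs p ψ → AtomOccurs p (.EU φ ψ)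
  | arL {φ ψ} : AtomOccurs p φ → AtomOccurs p (.AR φ ψ)
  | arR {φ ψ} : AtomOccurs p ψ → AtomOccurs p (.AR φ ψ)
  | erL {φ ψ} : AtomOccurs p φ → AtomOccurs p (.ER φ ψ)
  | erR {φ ψ} : AtomOccurs p ψ → AtomOccurs p (.ER φ ψ)

-- Standard connectives `{∧, ∨, ¬, ⊤, ⊥}`, expressed as Boolean-function connectives.
def gneg (a : GF) : GF := .bf (fun v => !(v 0)) ![a]
def gand (a b : GF) : GF := .bf (fun v => v 0 && v 1) ![a, b]
def gor (a b : GF) : GF := .bf (fun v => v 0 || v 1) ![a, b]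
def gtr : GF := .bf (n := 0) (fun _ => true) ![]
def gfls : GF := .bf (n := 0) (fun _ => false) ![]
def giff (a b : GF) : GF := gor (gand a b) (gand (gneg a) (gneg b))
def bigAnd (l : List GF) : GF := l.foldr gand gtr
def bigOr (l : List GF) : GF := l.foldr gor gfls

/-- The one-step definition of a subformula `α` in terms of the fresh propositions
`x_β` of its immediate subformulas; Boolean functions are expanded into DNF over
`{∧, ∨, ¬}`. -/
noncomputable def oneStep (x : GF → ℕ) : GF → GF
  | .atom p => .atom p
  | .bf f args => bigOr (((Finset.univ.filter (fun b => f b = true)).toList).map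
      (fun b => bigAnd (List.ofFn (fun i =>
        if b i then GF.atom (x (args i)) else gneg (.atom (x (args i)))))))
  | .AX φ => .AX (.atom (x φ))
  | .EX φ => .EX (.atom (x φ))
  | .AF φ => .AF (.atom (x φ))
  | .EF φ => .EF (.atom (x φ))
  | .AG φ => .AG (.atom (x φ))
  | .EG φ => .EG (.atom (x φ))
  | .AU φ ψ => .AU (.atom (x φ)) (.atom (x ψ))
  | .EU φ ψ => .EU (.atom (x φ)) (.atom (x ψ))
  | .AR φ ψ => .AR (.atom (x φ)) (.atom (x ψ))
  | .ER φ ψ => .ER (.atom (x φ)) (.atom (x ψ))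

/-- The conjunction `ξ` of the biconditionals `x_α ↔ (one-step definition of α)` over
all subformulas `α` of `φ`. -/
noncomputable def xiFormula (x : GF → ℕ) (φ : GF) : GF :=
  bigAnd ((SFlist φ).map (fun α => giff (.atom (x α)) (oneStep x α)))

/-- The reduced formula `ψ := x_φ ∧ AG ξ`, of temporal depth 2. -/
noncomputable def psiFormula (x : GF → ℕ) (φ : GF) : GF :=
  gand (.atom (x φ)) (.AG (xiFormula x φ))

open Relation

open Classical in
theorem gsat_bf {W : Type} (K : Kripke W) {n : ℕ} (f : (Fin n → Bool) → Bool)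
    (args : Fin n → GF) (w : W) :
    gsat K (.bf f args) w ↔ f (fun i => decide (gsat K (args i) w)) = true := by
  refine ⟨fun ⟨b, hfb, hb⟩ => ?_, fun h => ⟨_, h, fun i => decide_eq_true_iff⟩⟩
  convert hfb
  exact Bool.eq_iff_iff.2 (decide_eq_true_iff.trans (hb _).symm)

section Connectives

open Classical

variable {W : Type} (K : Kripke W) (w : W)

theorem gsat_gneg (a : GF) : gsat K (gneg a) w ↔ ¬ gsat K a w := by
  rw [gneg, gsat_bf, Bool.not_eq_true']
  exact decide_eq_false_iff_not

theorem gsat_gand (a b : GF) : gsat K (gand a b) w ↔ gsat K a w ∧ gsat K b w := by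
  rw [gand, gsat_bf, Bool.and_eq_true]
  exact and_congr decide_eq_true_iff decide_eq_true_iff

theorem gsat_gor (a b : GF) : gsat K (gor a b) w ↔ gsat K a w ∨ gsat K b w := by
  rw [gor, gsat_bf, Bool.or_eq_true]
  exact or_congr decide_eq_true_iff decide_eq_true_iff

theorem gsat_giff (a b : GF) : gsat K (giff a b) w ↔ (gsat K a w ↔ gsat K b w) := by
  rw [giff, gsat_gor, gsat_gand, gsat_gand, gsat_gneg, gsat_gneg]
  tauto

theorem gsat_bigAnd (l : List GF) : gsat K (bigAnd l) w ↔ ∀ a ∈ l, gsat K a w := by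
  induction l with
  | nil => simp [bigAnd, gtr, gsat_bf]
  | cons a l ih => simp [bigAnd, gsat_gand, ← ih]

theorem gsat_bigOr (l : List GF) : gsat K (bigOr l) w ↔ ∃ a ∈ l, gsat K a w := by
  induction l with
  | nil => simp [bigOr, gfls, gsat_bf]
  | cons a l ih => simp [bigOr, gsat_gor, ← ih]

theorem gsat_oneStep_bf (x : GF → ℕ) {n : ℕ} (f : (Fin n → Bool) → Bool)
    (args : Fin n → GF) :
    gsat K (oneStep x (.bf f args)) w ↔
      ∃ b, f b = true ∧ ∀ i, (b i = true ↔ K.V (x (args i)) w) := by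
  have literal : ∀ (b : Bool) (p : ℕ),
      gsat K (if b then .atom p else gneg (.atom p)) w ↔ (b = true ↔ K.V p w) := by
    intro b p
    cases b <;> simp [gsat_gneg, gsat]
  simp [oneStep, gsat_bigOr, gsat_bigAnd, List.mem_ofFn, literal]

end Connectives

section TemporalDepth

theorem td_bf_le {n m : ℕ} {f : (Fin n → Bool) → Bool} {args : Fin n → GF}
    (h : ∀ i, (args i).td ≤ m) : (GF.bf f args).td ≤ m :=
  Finset.sup_le fun i _ => h i

variable {a b : GF} {m : ℕ}

theorem td_gneg_le (ha : a.td ≤ m) : (gneg a).td ≤ m :=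
  td_bf_le <| Fin.forall_fin_one.2 ha

theorem td_gand_le (ha : a.td ≤ m) (hb : b.td ≤ m) : (gand a b).td ≤ m :=
  td_bf_le <| Fin.forall_fin_two.2 ⟨ha, hb⟩

theorem td_gor_le (ha : a.td ≤ m) (hb : b.td ≤ m) : (gor a b).td ≤ m :=
  td_bf_le <| Fin.forall_fin_two.2 ⟨ha, hb⟩

theorem td_giff_le (ha : a.td ≤ m) (hb : b.td ≤ m) : (giff a b).td ≤ m :=
  td_gor_le (td_gand_le ha hb) (td_gand_le (td_gneg_le ha) (td_gneg_le hb))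

theorem td_bigAnd_le {l : List GF} (h : ∀ a ∈ l, a.td ≤ m) : (bigAnd l).td ≤ m := by
  induction l with
  | nil => exact td_bf_le fun i => i.elim0
  | cons a l ih => exact td_gand_le (h a (by simp)) (ih fun b hb => h b (by simp [hb]))

theorem td_bigOr_le {l : List GF} (h : ∀ a ∈ l, a.td ≤ m) : (bigOr l).td ≤ m := by
  induction l with
  | nil => exact td_bf_le fun i => i.elim0
  | cons a l ih => exact td_gor_le (h a (by simp)) (ih fun b hb => h b (by simp [hb]))

theorem td_oneStep_le (x : GF → ℕ) (α : GF) : (oneStep x α).td ≤ 1 := by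
  cases α with
  | bf f args =>
    refine td_bigOr_le fun a ha => ?_
    obtain ⟨b, -, rfl⟩ := List.mem_map.1 ha
    refine td_bigAnd_le fun c hc => ?_
    obtain ⟨i, rfl⟩ := List.mem_ofFn.1 hc
    split
    · simp [GF.td]
    · exact td_gneg_le (by simp [GF.td])
  | _ => simp [oneStep, GF.td]

theorem td_psiFormula_le (x : GF → ℕ) (φ : GF) : (psiFormula x φ).td ≤ 2 := by
  have hξ : (xiFormula x φ).td ≤ 1 := td_bigAnd_le fun a ha => by
    obtain ⟨α, -, rfl⟩ := List.mem_map.1 ha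
    exact td_giff_le (by simp [GF.td]) (td_oneStep_le x α)
  exact td_gand_le (by simp [GF.td]) (by simpa [GF.td] using hξ)

end TemporalDepth

def GF.children : GF → List GF
  | .atom _ => []
  | .bf _ args => List.ofFn args
  | .AX φ | .EX φ | .AF φ | .EF φ | .AG φ | .EG φ => [φ]
  | .AU φ ψ | .EU φ ψ | .AR φ ψ | .ER φ ψ => [φ, ψ]

@[elab_as_elim]
theorem GF.children_induction {P : GF → Prop}
    (h : ∀ α, (∀ β ∈ α.children, P β) → P α) (α : GF) : P α := by
  induction α <;> apply h <;> simp_all [GF.children, List.mem_ofFn]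

theorem SFlist_eq_cons_flatMap (α : GF) : SFlist α = α :: α.children.flatMap SFlist := by
  cases α <;> simp [SFlist, GF.children, List.flatMap, List.map_ofFn, Function.comp_def]

theorem mem_SFlist {α β : GF} :
    β ∈ SFlist α ↔ β = α ∨ ∃ γ ∈ α.children, β ∈ SFlist γ := by
  rw [SFlist_eq_cons_flatMap, List.mem_cons, List.mem_flatMap]

theorem self_mem_SFlist (α : GF) : α ∈ SFlist α :=
  mem_SFlist.2 (Or.inl rfl)

theorem mem_SFlist_of_mem_children {φ α β : GF} (hα : α ∈ SFlist φ)
    (hβ : β ∈ α.children) : β ∈ SFlist φ := by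
  induction φ using GF.children_induction with
  | h φ ih =>
    rcases mem_SFlist.1 hα with rfl | ⟨γ, hγ, hαγ⟩
    · exact mem_SFlist.2 (Or.inr ⟨β, hβ, self_mem_SFlist β⟩)
    · exact mem_SFlist.2 (Or.inr ⟨γ, hγ, ih γ hγ hαγ⟩)

theorem AtomOccurs.of_mem_children {p : ℕ} {α β : GF} (hβ : β ∈ α.children)
    (h : AtomOccurs p β) : AtomOccurs p α := by
  cases α <;> simp only [GF.children, List.mem_ofFn, List.mem_cons, List.not_mem_nil,
    or_false] at hβ <;> aesop (add 50% constructors AtomOccurs)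

theorem atomOccurs_of_atom_mem_SFlist {p : ℕ} {φ : GF} (h : .atom p ∈ SFlist φ) :
    AtomOccurs p φ := by
  induction φ using GF.children_induction with
  | h φ ih =>
    rcases mem_SFlist.1 h with hφ | ⟨γ, hγ, hpγ⟩
    · exact hφ ▸ .atom
    · exact (ih γ hγ hpγ).of_mem_children hγ

section Paths

variable {W : Type} {R : W → W → Prop}

theorem IsPath.reflTransGen {π : ℕ → W} (hπ : IsPath R π) (i : ℕ) :
    ReflTransGen R (π 0) (π i) := by
  induction i with
  | zero => exact .refl
  | succ i ih => exact ih.tail (hπ i)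

theorem Serial.exists_isPath (hR : Serial R) (w : W) : ∃ π, IsPath R π ∧ π 0 = w := by
  choose next hnext using hR
  exact ⟨fun n => next^[n] w, fun n => by simpa [Function.iterate_succ_apply'] using hnext _,
    rfl⟩

theorem Serial.exists_isPath_of_reflTransGen (hR : Serial R) {w u : W}
    (h : ReflTransGen R w u) : ∃ π n, IsPath R π ∧ π 0 = w ∧ π n = u := by
  induction h using ReflTransGen.head_induction_on with
  | refl =>
    obtain ⟨π, hπ, h0⟩ := hR.exists_isPath u
    exact ⟨π, 0, hπ, h0, h0⟩
  | head hww' _ ih =>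
    obtain ⟨π, n, hπ, h0, hn⟩ := ih
    refine ⟨Nat.rec _ fun k _ => π k, n + 1, fun k => ?_, rfl, hn⟩
    cases k with
    | zero => simpa [h0] using hww'
    | succ k => exact hπ k

theorem gsat_AG_iff_forall_reflTransGen {V : ℕ → W → Prop} (hR : Serial R) (β : GF) (w : W) :
    gsat ⟨R, V⟩ (.AG β) w ↔ ∀ u, ReflTransGen R w u → gsat ⟨R, V⟩ β u := by
  refine ⟨fun h u hu => ?_, fun h π hπ h0 i => h _ (h0 ▸ hπ.reflTransGen i)⟩
  obtain ⟨π, n, hπ, h0, rfl⟩ := hR.exists_isPath_of_reflTransGen hu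
  exact h π hπ h0 n

end Paths

theorem gsat_oneStep_iff {W : Type} {R : W → W → Prop} {V₁ V₂ : ℕ → W → Prop} (x : GF → ℕ)
    {α : GF} {u : W} (hatom : ∀ p, α = .atom p → (V₁ p u ↔ V₂ p u))
    (hchild : ∀ β ∈ α.children, ∀ v, ReflTransGen R u v →
      (V₁ (x β) v ↔ gsat ⟨R, V₂⟩ β v)) :
    gsat ⟨R, V₁⟩ (oneStep x α) u ↔ gsat ⟨R, V₂⟩ α u := by
  cases α with
  | atom p => exact hatom p rfl
  | bf f args =>
    rw [gsat_oneStep_bf]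
    refine exists_congr fun b => and_congr_right fun _ => forall_congr' fun i => ?_
    exact iff_congr Iff.rfl (hchild _ (List.mem_ofFn.2 ⟨i, rfl⟩) u .refl)
  | _ =>
    simp only [oneStep, gsat]
    first
    | refine forall_congr' fun π => forall_congr' fun hπ => forall_congr' fun h0 => ?_
    | refine exists_congr fun π => and_congr_right fun hπ => and_congr_right fun h0 => ?_
    have hchild_π := fun β hβ i => hchild β hβ (π i) (h0 ▸ hπ.reflTransGen i)
    simp only [GF.children, List.mem_cons, List.not_mem_nil, forall_eq_or_imp, forall_eq,
      or_false] at hchild_π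
    simp [hchild_π]

section Reduction

variable {W : Type} {R : W → W → Prop} {V : ℕ → W → Prop} {x : GF → ℕ} {φ : GF} {w : W}

theorem gsat_xiFormula (K : Kripke W) (v : W) :
    gsat K (xiFormula x φ) v ↔ ∀ α ∈ SFlist φ, (K.V (x α) v ↔ gsat K (oneStep x α) v) := by
  simp [xiFormula, gsat_bigAnd, gsat_giff, gsat]

theorem gsat_psiFormula (K : Kripke W) :
    gsat K (psiFormula x φ) w ↔ K.V (x φ) w ∧ gsat K (.AG (xiFormula x φ)) w := by
  rw [psiFormula, gsat_gand]
  rfl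

theorem gsat_psiFormula_extend (hinj : Function.Injective x)
    (hfresh : ∀ p, AtomOccurs p φ → ∀ α, x α ≠ p) (h : gsat ⟨R, V⟩ φ w) :
    gsat ⟨R, Function.extend x (gsat ⟨R, V⟩) V⟩ (psiFormula x φ) w := by
  set V' := Function.extend x (gsat ⟨R, V⟩) V
  have hx : ∀ β, V' (x β) = gsat ⟨R, V⟩ β := hinj.extend_apply _ _
  have hξ : ∀ v, gsat ⟨R, V'⟩ (xiFormula x φ) v := by
    refine fun v => (gsat_xiFormula _ v).2 fun α hα => ?_
    refine (hx α ▸ gsat_oneStep_iff x (fun p hp => ?_) fun β _ v _ => by rw [hx]).symm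
    subst hp
    refine iff_of_eq (congrFun (Function.extend_apply' _ _ _ ?_) v)
    exact fun ⟨β, hβ⟩ => hfresh p (atomOccurs_of_atom_mem_SFlist hα) β hβ
  exact (gsat_psiFormula _).2 ⟨(congrFun (hx φ) w).mpr h, fun π _ _ i => hξ (π i)⟩

theorem gsat_of_gsat_psiFormula (hR : Serial R) (h : gsat ⟨R, V⟩ (psiFormula x φ) w) :
    gsat ⟨R, V⟩ φ w := by
  rw [gsat_psiFormula, gsat_AG_iff_forall_reflTransGen hR] at h
  obtain ⟨hxφ, hξ⟩ := h
  suffices key : ∀ α ∈ SFlist φ, ∀ u, ReflTransGen R w u → (V (x α) u ↔ gsat ⟨R, V⟩ α u) from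
    (key φ (self_mem_SFlist φ) w .refl).1 hxφ
  intro α
  induction α using GF.children_induction with
  | h α ih =>
    intro hα u hu
    refine ((gsat_xiFormula _ u).1 (hξ u hu) α hα).trans ?_
    exact gsat_oneStep_iff x (fun _ _ => Iff.rfl) fun β hβ v hv =>
      ih β hβ (mem_SFlist_of_mem_children hα hβ) v (hu.trans hv)

end Reduction

/-- Introducing a fresh proposition `x_α` per subformula `α` reduces CTL over an
arbitrary Boolean base to temporal depth 2 with `AG`: `ψ := x_φ ∧ AG ξ` has temporal
depth at most 2 and is frame-equivalent to `φ` — a rooted serial frame carries a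
valuation satisfying `φ` iff it carries a valuation satisfying `ψ`. -/
theorem depth_two_AG_reduction (φ : GF) (x : GF → ℕ)
    (hinj : Function.Injective x)
    (hfresh : ∀ p : ℕ, AtomOccurs p φ → ∀ α : GF, x α ≠ p) :
    (psiFormula x φ).td ≤ 2 ∧
    ∀ (W : Type) (R : W → W → Prop) (w : W), Serial R →
      ((∃ V : ℕ → W → Prop, gsat ⟨R, V⟩ φ w) ↔
       (∃ V : ℕ → W → Prop, gsat ⟨R, V⟩ (psiFormula x φ) w)) := by
  refine ⟨td_psiFormula_le x φ, fun W R w hR => ⟨?_, ?_⟩⟩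
  · rintro ⟨V, hV⟩
    exact ⟨_, gsat_psiFormula_extend hinj hfresh hV⟩
  · rintro ⟨V, hV⟩
    exact ⟨V, gsat_of_gsat_psiFormula hR hV⟩
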